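/- Let R be a finite commutative principal ideal ring with representatives a_0, …, a_t of its principal ideals. Let A be the (t+1)×(t+1) 0–1 matrix with A_{ij} = 1 iff a_iR ⊆ a_jR, and let Q be the 0–1 matrix with Q_{ij} = 1 iff a_jR ⊆ (a_iR)⊥ = {r ∈ R : a_i r = 0}. Then Q = A P for some (t+1)×(t+1) permutation matrix P. Furthermore, the representatives a_0, …, a_t can be chosen (reordered) so that (a_iR)⊥ = a_{t−i}R for all i = 0, …, t; for such a choice Q = A J, where J is the (t+1)×(t+1) anti-diagonal matrix with all anti-diagonal entries equal to 1. -/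

import Mathlib

noncomputable section
open scoped BigOperators

/-- The dual of a linear code `C ⊆ Rⁿ` with respect to the standard inner
product `u·v = ∑ ℓ, u ℓ * v ℓ`. -/
def dualCode {R : Type*} [CommRing R] {n : ℕ} (C : Submodule R (Fin n → R)) :
    Submodule R (Fin n → R) where
  carrier := {v | ∀ u ∈ C, ∑ ℓ, u ℓ * v ℓ = 0}
  add_mem' := by
    intro v w hv hw u hu
    simp only [Set.mem_setOf_eq] at *
    have h1 := hv u hu
    have h2 := hw u hu
    simp only [Pi.add_apply, mul_add, Finset.sum_add_distrib, h1, h2, add_zero]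
  zero_mem' := by
    intro u hu
    simp
  smul_mem' := by
    intro c v hv u hu
    simp only [Set.mem_setOf_eq] at *
    have h := hv u hu
    have : ∑ ℓ, u ℓ * (c • v) ℓ = c * ∑ ℓ, u ℓ * v ℓ := by
      rw [Finset.mul_sum]
      exact Finset.sum_congr rfl fun ℓ _ => by
        simp only [Pi.smul_apply, smul_eq_mul]; ring
    rw [this, h, mul_zero]

/-- A finite commutative ring is Frobenius iff `|C|·|C⊥| = |R|ⁿ` for every
linear code `C` of every length `n` over `R`. -/
def IsFrobeniusRing (R : Type*) [CommRing R] [Fintype R] : Prop :=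
  ∀ (n : ℕ) (C : Submodule R (Fin n → R)),
    Nat.card C * Nat.card (dualCode C) = Fintype.card R ^ n

open Classical

/-- The adjacency matrix `A` of the poset of principal ideals of `R`:
`A_{ij} = 1` iff `a_i R ⊆ a_j R`. -/
def adjMat {R : Type*} [CommRing R] {t : ℕ} (a : Fin (t + 1) → R) :
    Matrix (Fin (t + 1)) (Fin (t + 1)) ℚ :=
  Matrix.of fun i j => if Ideal.span {a i} ≤ Ideal.span {a j} then 1 else 0

/-- The matrix `Q`: `Q_{ij} = 1` iff `a_j R ⊆ (a_i R)⊥ = {r : a_i r = 0}`. -/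
def qMat {R : Type*} [CommRing R] {t : ℕ} (a : Fin (t + 1) → R) :
    Matrix (Fin (t + 1)) (Fin (t + 1)) ℚ :=
  Matrix.of fun i j => if ∀ r ∈ Ideal.span {a j}, a i * r = 0 then 1 else 0

/-- The anti-diagonal matrix `J` with all anti-diagonal entries equal to `1`. -/
def antiDiagMat (t : ℕ) : Matrix (Fin (t + 1)) (Fin (t + 1)) ℚ :=
  Matrix.of fun i j => if j = i.rev then 1 else 0

/-!
Since every ideal of `R` is principal, `x ↦ xR` identifies `R` modulo `(xR)⊥` with `xR`, so
`|I| · |I⊥| = |R|` for every ideal `I`; as `I ≤ I⊥⊥`, counting gives `I⊥⊥ = I`. Hence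
`a_i R ↦ (a_i R)⊥` is an involution `π` of the indices, and `a_i a_j = 0` says
`a_i R ⊆ a_{π j} R`, which is `Q = A P_π`.

For the reordering, `π` must be conjugate to `i ↦ t - i`; two involutions of a finite set are
conjugate as soon as each has at most one fixed point. A fixed point of `π` is a self-dual
ideal `xR = (xR)⊥`, and there is at most one: if `xR` and `yR` are both self-dual, write
`xR + yR = zR`; then `z` divides `x, y` with cofactors `c, d`, and `z = Ax + By`, so that
`e = 1 - cA - dB` annihilates `z`, hence `x`, hence `e ∈ xR` and `e² = 0`. The identities
`x (1 - cA) = cBy` and `y (1 - dB) = dAx` together with `x² = y² = 0` give `xy (1 + e) = 0`,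
so `xy = 0`, i.e. `y ∈ (xR)⊥ = xR` and `x ∈ (yR)⊥ = yR`.
-/

namespace Ideal

variable {R : Type*} [CommRing R]

theorem le_annihilator_annihilator (I : Ideal R) : I ≤ I.annihilator.annihilator :=
  fun r hr => Submodule.mem_annihilator.mpr fun s hs => by
    rw [smul_eq_mul, mul_comm]
    exact Submodule.mem_annihilator.mp hs r hr

theorem card_span_singleton_mul_card_annihilator [Finite R] (x : R) :
    Nat.card (span {x} : Ideal R) * Nat.card (span {x} : Ideal R).annihilator = Nat.card R := by
  rw [Submodule.card_eq_card_quotient_mul_card (span {x} : Ideal R).annihilator,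
    annihilator_span_singleton_eq_torsionOf, mul_comm]
  congr 1
  exact (Nat.card_congr (quotTorsionOfEquivSpanSingleton R R x).toEquiv).symm

theorem annihilator_annihilator [Finite R] [IsPrincipalIdealRing R] (I : Ideal R) :
    I.annihilator.annihilator = I := by
  have hcard (J : Ideal R) : Nat.card J * Nat.card J.annihilator = Nat.card R := by
    rw [← (IsPrincipalIdealRing.principal J).span_singleton_generator]
    exact card_span_singleton_mul_card_annihilator _
  refine (Submodule.toAddSubgroup_injective
    (AddSubgroup.eq_of_le_of_card_ge I.le_annihilator_annihilator ?_)).symm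
  have hI := hcard I
  have hJ := hcard I.annihilator
  have : 0 < Nat.card I.annihilator := Nat.card_pos
  change Nat.card I.annihilator.annihilator ≤ Nat.card I
  nlinarith

theorem forall_mem_span_singleton_mul_eq_zero_iff (x y : R) :
    (∀ r ∈ span {y}, x * r = 0) ↔ span {x} ≤ (span {y} : Ideal R).annihilator := by
  rw [span_singleton_le_iff_mem, Submodule.mem_annihilator_span_singleton, smul_eq_mul]
  refine ⟨fun h => h y (mem_span_singleton_self y), fun h r hr => ?_⟩
  obtain ⟨s, rfl⟩ := mem_span_singleton'.mp hr
  rw [mul_left_comm, h, mul_zero]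

theorem mul_eq_zero_iff_of_annihilator_eq {x : R}
    (hx : (span {x} : Ideal R).annihilator = span {x}) (r : R) : x * r = 0 ↔ x ∣ r := by
  rw [← mem_span_singleton, ← hx, Submodule.mem_annihilator_span_singleton, smul_eq_mul,
    mul_comm]

theorem span_singleton_eq_of_annihilator_eq [IsBezout R] {x y : R}
    (hx : (span {x} : Ideal R).annihilator = span {x})
    (hy : (span {y} : Ideal R).annihilator = span {y}) : span {x} = span {y} := by
  obtain ⟨z, hz⟩ := (IsBezout.span_pair_isPrincipal x y).principal
  rw [submodule_span_eq] at hz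
  obtain ⟨c, hc⟩ : z ∣ x := mem_span_singleton.mp (hz ▸ subset_span (by simp))
  obtain ⟨d, hd⟩ : z ∣ y := mem_span_singleton.mp (hz ▸ subset_span (by simp))
  obtain ⟨A, B, hAB⟩ := mem_span_pair.mp (hz ▸ mem_span_singleton_self z)
  have hx2 : x * x = 0 := (mul_eq_zero_iff_of_annihilator_eq hx x).mpr dvd_rfl
  have hy2 : y * y = 0 := (mul_eq_zero_iff_of_annihilator_eq hy y).mpr dvd_rfl
  obtain ⟨k, hk⟩ : x ∣ 1 - c * A - d * B := (mul_eq_zero_iff_of_annihilator_eq hx _).mp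
    (by linear_combination (1 - d * B) * hc + c * B * hd - c * hAB)
  have hxy : x * y = 0 := by
    linear_combination y * hc - y * c * hAB + B * c * hy2 + x * hd - x * d * hAB + A * d * hx2
      - x * y * hk - y * k * hx2
  exact le_antisymm
    (span_singleton_le_span_singleton.mpr
      ((mul_eq_zero_iff_of_annihilator_eq hy x).mp (by rw [mul_comm, hxy])))
    (span_singleton_le_span_singleton.mpr ((mul_eq_zero_iff_of_annihilator_eq hx y).mp hxy))

end Ideal

open Ideal Equiv

theorem Equiv.Perm.isConj_of_sq_eq_one_of_fixedPoints_subsingleton {α : Type*} [Fintype α]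
    [DecidableEq α] {σ τ : Perm α} (hσ : σ ^ 2 = 1) (hτ : τ ^ 2 = 1)
    (hσfix : (Function.fixedPoints σ).Subsingleton)
    (hτfix : (Function.fixedPoints τ).Subsingleton) : IsConj σ τ := by
  have count (π : Perm α) (hπ : π ^ 2 = 1) (hfix : (Function.fixedPoints π).Subsingleton) :
      π.cycleType = Multiset.replicate π.cycleType.card 2 ∧
      2 * π.cycleType.card + Fintype.card (Function.fixedPoints π) = Fintype.card α ∧
      Fintype.card (Function.fixedPoints π) ≤ 1 := by
    have hrep := Perm.cycleType_of_pow_prime_eq_one (p := 2) hπ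
    have hsum : π.cycleType.sum = 2 * π.cycleType.card := by
      rw [hrep, Multiset.sum_replicate, Multiset.card_replicate, smul_eq_mul, mul_comm]
    refine ⟨hrep, ?_, Fintype.card_le_one_iff_subsingleton.mpr hfix.coe_sort⟩
    rw [π.card_fixedPoints, ← hsum]
    exact Nat.add_sub_of_le π.sum_cycleType_le
  obtain ⟨hσrep, hσcard, hσle⟩ := count σ hσ hσfix
  obtain ⟨hτrep, hτcard, hτle⟩ := count τ hτ hτfix
  rw [Perm.isConj_iff_cycleType_eq, hσrep, hτrep]
  congr 1
  omega

theorem Fin.fixedPoints_revPerm_subsingleton (n : ℕ) :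
    (Function.fixedPoints (Fin.revPerm : Perm (Fin n))).Subsingleton := by
  intro i hi j hj
  have hi' := congrArg Fin.val (hi : Fin.rev i = i)
  have hj' := congrArg Fin.val (hj : Fin.rev j = j)
  rw [Fin.revPerm_apply, Fin.val_rev] at hi' hj'
  exact Fin.ext (by omega)

theorem exists_involution_annihilator_span_eq {R ι : Type*} [CommRing R] [Finite R]
    [IsPrincipalIdealRing R] (a : ι → R) (hrep : ∀ r : R, ∃ i, span {r} = span {a i})
    (hinj : ∀ i j, span {a i} = span {a j} → i = j) :
    ∃ π : Perm ι, π ^ 2 = 1 ∧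
      ∀ i, (span {a i} : Ideal R).annihilator = span {a (π i)} := by
  have hdual (i : ι) : ∃ j, (span {a i} : Ideal R).annihilator = span {a j} := by
    obtain ⟨j, hj⟩ := hrep (IsPrincipalIdealRing.principal (span {a i}).annihilator).generator
    exact ⟨j, by rw [← hj, span_singleton_generator]⟩
  choose π hπ using hdual
  have hinv : Function.Involutive π := fun i =>
    hinj _ _ (by rw [← hπ, ← hπ, annihilator_annihilator])
  exact ⟨hinv.toPerm, Equiv.ext hinv, hπ⟩

theorem qMat_eq_adjMat_mul_permMatrix {R : Type*} [CommRing R] {t : ℕ} (a : Fin (t + 1) → R)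
    (π : Perm (Fin (t + 1)))
    (hπ : ∀ i, (span {a i} : Ideal R).annihilator = span {a (π i)}) :
    qMat a = adjMat a * (π⁻¹).permMatrix ℚ := by
  rw [Perm.permMatrix, PEquiv.mul_toMatrix_toPEquiv]
  ext i j
  simp only [qMat, adjMat, Matrix.of_apply, Matrix.submatrix_apply, id_eq, Perm.inv_def, symm_symm]
  exact if_congr (by rw [forall_mem_span_singleton_mul_eq_zero_iff, hπ]) rfl rfl

theorem antiDiagMat_eq_permMatrix (t : ℕ) :
    antiDiagMat t = (Fin.revPerm : Perm (Fin (t + 1))).permMatrix ℚ := by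
  ext i j
  simp [antiDiagMat, Perm.permMatrix, PEquiv.toMatrix_apply, eq_comm]

theorem stmt12 {R : Type*} [CommRing R] [Fintype R] [IsPrincipalIdealRing R]
    {t : ℕ} (a : Fin (t + 1) → R)
    (hrep : ∀ r : R, ∃ i, Ideal.span {r} = Ideal.span {a i})
    (hinj : ∀ i j, Ideal.span {a i} = Ideal.span {a j} → i = j) :
    (∃ σ : Equiv.Perm (Fin (t + 1)), qMat a = adjMat a * σ.permMatrix ℚ) ∧
    (∃ σ : Equiv.Perm (Fin (t + 1)),
      (∀ i : Fin (t + 1),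
        {r : R | a (σ i) * r = 0} = (Ideal.span {a (σ i.rev)} : Set R)) ∧
      qMat (a ∘ σ) = adjMat (a ∘ σ) * antiDiagMat t) := by
  obtain ⟨π, hπ2, hπ⟩ := exists_involution_annihilator_span_eq a hrep hinj
  have hfix : (Function.fixedPoints π).Subsingleton := fun i hi j hj =>
    hinj i j (span_singleton_eq_of_annihilator_eq (by rw [hπ, hi]) (by rw [hπ, hj]))
  obtain ⟨σ, hσ⟩ := isConj_iff.mp <| Perm.isConj_of_sq_eq_one_of_fixedPoints_subsingleton
    (Equiv.ext Fin.rev_rev) hπ2 (Fin.fixedPoints_revPerm_subsingleton _) hfix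
  have hrev (i : Fin (t + 1)) : (span {a (σ i)} : Ideal R).annihilator = span {a (σ i.rev)} := by
    rw [hπ, ← hσ]
    simp
  refine ⟨⟨π⁻¹, qMat_eq_adjMat_mul_permMatrix a π hπ⟩, σ, fun i => ?_, ?_⟩
  · rw [← hrev i]
    ext r
    rw [SetLike.mem_coe, Submodule.mem_annihilator_span_singleton, smul_eq_mul, mul_comm]
    rfl
  · rw [qMat_eq_adjMat_mul_permMatrix (a ∘ σ) Fin.revPerm hrev, antiDiagMat_eq_permMatrix,
      Perm.inv_def, Fin.revPerm_symm]

end
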